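/- Let α = 0, let β ∈ (−π, π] with β ∉ {0, π}, let M be an n×n non-diagonal Hermitian unitary modularly permutation-symmetric complex matrix with |M_{jj}| = r, |M_{jℓ}| = t > 0 (j ≠ ℓ), d = r/t, and let U = exp(i(α+β)/2)·( cos((α−β)/2)·I + i·sin((α−β)/2)·M ). Then for every real k > 0 and all indices j ≠ ℓ, the ratio ρ(k) = |S(k)_{jj}|² / |S(k)_{jℓ}|² satisfies ρ(k) = d² + (d² + n − 1)·cot²(β/2)·k² (generalized δ'-coupling). -/

import Mathlib

open Matrix Real

/-!
Since `M` is Hermitian and unitary, `M * M = 1`, and with `w = exp (I β)` the matrix `U` is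
`((1 + w) / 2) • 1 + ((1 - w) / 2) • M`. Everything then happens in the commutative algebra
spanned by `1` and `M`, where `(a • 1 + b • M)⁻¹ = (a • 1 - b • M) / (a² - b²)`. The scattering
matrix becomes `c • 1 + e • M` with `c / e = k (1 + w) / (1 - w) = I k cot (β / 2)`, so
`|S j j|² / |S j l|² = |M j j + I k cot (β / 2)|² / t² = (r² + k² cot² (β / 2)) / t²`, the
diagonal entry of `M` being real. Finally a row of the unitary `M` gives `r² + (n - 1) t² = 1`,
i.e. `d² + n - 1 = 1 / t²`.
-/

namespace Complex

lemma exp_I_mul_half_add_mul_cos_half_sub (x y : ℂ) :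
    exp (I * ((x + y) / 2)) * cos ((x - y) / 2) = (exp (I * x) + exp (I * y)) / 2 := by
  rw [cos, mul_div_assoc', mul_add, ← exp_add, ← exp_add]
  ring_nf

lemma I_mul_sin (z : ℂ) : I * sin z = (exp (z * I) - exp (-z * I)) / 2 := by
  rw [sin]
  linear_combination (exp (-z * I) - exp (z * I)) / 2 * I_sq

lemma exp_I_mul_half_add_mul_I_mul_sin_half_sub (x y : ℂ) :
    exp (I * ((x + y) / 2)) * (I * sin ((x - y) / 2)) = (exp (I * x) - exp (I * y)) / 2 := by
  rw [I_mul_sin, mul_div_assoc', mul_sub, ← exp_add, ← exp_add]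
  ring_nf

lemma one_add_exp_div_one_sub_exp (x : ℂ) :
    (1 + exp (I * x)) / (1 - exp (I * x)) = I * cot (x / 2) := by
  rw [cot_eq_exp_ratio, mul_div_assoc', mul_div_mul_left _ _ I_ne_zero, add_comm,
    show 2 * I * (x / 2) = I * x by ring]

lemma exp_I_mul_ne_one {β : ℝ} (hβ : β ∈ Set.Ioc (-π) π) (hβ0 : β ≠ 0) :
    exp (I * β) ≠ 1 := by
  rw [Ne, exp_eq_one_iff]
  rintro ⟨m, hm⟩
  have hβm : β = 2 * π * m := by simpa [mul_comm, mul_left_comm] using congrArg im hm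
  have hm0 : m = 0 := by
    obtain ⟨h₁, h₂⟩ := hβ
    rw [hβm] at h₁ h₂
    have hlo : (-1 : ℝ) < 2 * m := by nlinarith [pi_pos]
    have hhi : 2 * (m : ℝ) ≤ 1 := by nlinarith [pi_pos]
    have : -1 < 2 * m := by exact_mod_cast hlo
    have : 2 * m ≤ 1 := by exact_mod_cast hhi
    omega
  exact hβ0 (by simpa [hm0] using hβm)

lemma add_one_add_sub_one_mul_ne_zero {k : ℝ} (hk : 0 < k) {w : ℂ} (hw : ‖w‖ = 1) :
    ((k : ℂ) + 1) + (k - 1) * w ≠ 0 := by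
  intro h
  have hnorm : ‖(k : ℂ) + 1‖ = ‖((k : ℂ) - 1) * w‖ := by
    rw [eq_neg_of_add_eq_zero_left h, norm_neg]
  rw [norm_mul, hw, mul_one, ← ofReal_one, ← ofReal_add, ← ofReal_sub, norm_real, norm_real,
    Real.norm_eq_abs, Real.norm_eq_abs, abs_of_pos (by linarith)] at hnorm
  have := (abs_sub_lt_iff.mpr ⟨by linarith, by linarith⟩ : |k - 1| < k + 1)
  linarith

lemma sq_norm_add_ofReal_mul_I {z : ℂ} (hz : z.im = 0) (y : ℝ) :
    ‖z + y * I‖ ^ 2 = ‖z‖ ^ 2 + y ^ 2 := by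
  simp only [Complex.sq_norm, normSq_apply, add_re, add_im, mul_I_re, mul_I_im, ofReal_re,
    ofReal_im, hz]
  ring

end Complex

namespace Matrix

variable {ι : Type*} [DecidableEq ι]

lemma exp_smul_cos_smul_one_add_I_mul_sin_smul (α β : ℝ) (M : Matrix ι ι ℂ) :
    Complex.exp (Complex.I * ((α + β) / 2)) •
        ((Real.cos ((α - β) / 2) : ℂ) • (1 : Matrix ι ι ℂ) +
          (Complex.I * (Real.sin ((α - β) / 2) : ℂ)) • M) =
      ((Complex.exp (Complex.I * α) + Complex.exp (Complex.I * β)) / 2) • 1 +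
        ((Complex.exp (Complex.I * α) - Complex.exp (Complex.I * β)) / 2) • M := by
  rw [smul_add, smul_smul, smul_smul]
  push_cast
  rw [Complex.exp_I_mul_half_add_mul_cos_half_sub,
    Complex.exp_I_mul_half_add_mul_I_mul_sin_half_sub]

lemma sq_norm_div_sq_norm_of_eq_smul_one_add_smul {K : Type*} [NormedField K]
    {S M : Matrix ι ι K} {c e : K} (hS : S = c • 1 + e • M) (he : e ≠ 0) {j l : ι}
    (hjl : j ≠ l) :
    ‖S j j‖ ^ 2 / ‖S j l‖ ^ 2 = ‖c / e + M j j‖ ^ 2 / ‖M j l‖ ^ 2 := by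
  have hjj : S j j = e * (c / e + M j j) := by simp [hS, mul_add, mul_div_cancel₀ _ he]
  have hjl : S j l = e * M j l := by simp [hS, one_apply_ne hjl]
  rw [hjj, hjl, norm_mul, norm_mul, mul_pow, mul_pow,
    mul_div_mul_left _ _ (pow_ne_zero 2 (norm_ne_zero_iff.mpr he))]

variable [Fintype ι]

lemma IsHermitian.mul_self_eq_one_of_mem_unitaryGroup {𝕜 : Type*} [RCLike 𝕜]
    {M : Matrix ι ι 𝕜} (hM : M.IsHermitian) (hMu : M ∈ unitaryGroup ι 𝕜) : M * M = 1 := by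
  simpa [hM.star_eq] using (mem_unitaryGroup_iff'.mp hMu)

lemma sum_sq_norm_apply_of_mem_unitaryGroup {𝕜 : Type*} [RCLike 𝕜] {U : Matrix ι ι 𝕜}
    (hU : U ∈ unitaryGroup ι 𝕜) (i : ι) : ∑ j, ‖U i j‖ ^ 2 = 1 := by
  have h : (U * Uᴴ) i i = 1 := by
    rw [← star_eq_conjTranspose, Unitary.mul_star_self_of_mem hU, one_apply_eq]
  simp only [mul_apply, conjTranspose_apply, RCLike.star_def, RCLike.mul_conj] at h
  exact_mod_cast h

lemma sq_add_card_sub_one_mul_sq_of_mem_unitaryGroup {𝕜 : Type*} [RCLike 𝕜] {U : Matrix ι ι 𝕜}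
    (hU : U ∈ unitaryGroup ι 𝕜) {r t : ℝ} (hr : ∀ j, ‖U j j‖ = r)
    (ht : ∀ j l, j ≠ l → ‖U j l‖ = t) (i : ι) : r ^ 2 + (Fintype.card ι - 1) * t ^ 2 = 1 := by
  have : Nonempty ι := ⟨i⟩
  have hrow := sum_sq_norm_apply_of_mem_unitaryGroup hU i
  rw [← Finset.add_sum_erase _ _ (Finset.mem_univ i), hr,
    Finset.sum_congr rfl fun l hl => by rw [ht i l (Finset.ne_of_mem_erase hl).symm],
    Finset.sum_const, Finset.card_erase_of_mem (Finset.mem_univ i), Finset.card_univ,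
    nsmul_eq_mul, Nat.cast_pred Fintype.card_pos] at hrow
  exact hrow

lemma smul_one_add_smul_mul_smul_one_add_smul {R : Type*} [CommRing R] {M : Matrix ι ι R}
    (hM : M * M = 1) (a b c e : R) :
    (a • 1 + b • M) * (c • 1 + e • M) =
      (a * c + b * e) • (1 : Matrix ι ι R) + (a * e + b * c) • M := by
  simp only [add_mul, mul_add, Matrix.smul_mul, Matrix.mul_smul, Matrix.one_mul, Matrix.mul_one,
    hM]
  module

section Field

variable {K : Type*} [Field K] {M : Matrix ι ι K}

lemma inv_smul_one_add_smul (hM : M * M = 1) {a b : K} (h : a ^ 2 - b ^ 2 ≠ 0) :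
    (a • 1 + b • M)⁻¹ =
      (a / (a ^ 2 - b ^ 2)) • (1 : Matrix ι ι K) + (-b / (a ^ 2 - b ^ 2)) • M := by
  refine inv_eq_right_inv ?_
  rw [smul_one_add_smul_mul_smul_one_add_smul hM]
  have h₁ : a * (a / (a ^ 2 - b ^ 2)) + b * (-b / (a ^ 2 - b ^ 2)) = 1 := by
    field_simp
    ring
  have h₀ : a * (-b / (a ^ 2 - b ^ 2)) + b * (a / (a ^ 2 - b ^ 2)) = 0 := by ring
  rw [h₁, h₀, one_smul, zero_smul, add_zero]

noncomputable def scatteringMatrix (U : Matrix ι ι K) (k : K) : Matrix ι ι K :=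
  ((k - 1) • U + (k + 1) • 1)⁻¹ * ((k + 1) • U + (k - 1) • 1)

lemma scatteringMatrix_eq_smul_one_add_smul [CharZero K]
    (hM : M * M = 1) {w k : K} (hk : k ≠ 0) (hD : (k + 1) + (k - 1) * w ≠ 0) :
    scatteringMatrix (((1 + w) / 2) • 1 + ((1 - w) / 2) • M) k =
      (k * (1 + w) / ((k + 1) + (k - 1) * w)) • (1 : Matrix ι ι K) +
        ((1 - w) / ((k + 1) + (k - 1) * w)) • M := by
  have hsq : ((k - 1) * ((1 + w) / 2) + (k + 1)) ^ 2 - ((k - 1) * ((1 - w) / 2)) ^ 2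
      = 2 * k * ((k + 1) + (k - 1) * w) := by ring
  have hden := hsq ▸ mul_ne_zero (mul_ne_zero two_ne_zero hk) hD
  rw [scatteringMatrix,
    show (k - 1) • (((1 + w) / 2) • 1 + ((1 - w) / 2) • M) + (k + 1) • (1 : Matrix ι ι K)
      = ((k - 1) * ((1 + w) / 2) + (k + 1)) • 1 + ((k - 1) * ((1 - w) / 2)) • M by module,
    show (k + 1) • (((1 + w) / 2) • 1 + ((1 - w) / 2) • M) + (k - 1) • (1 : Matrix ι ι K)
      = ((k + 1) * ((1 + w) / 2) + (k - 1)) • 1 + ((k + 1) * ((1 - w) / 2)) • M by module,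
    inv_smul_one_add_smul hM hden, smul_one_add_smul_mul_smul_one_add_smul hM, hsq]
  congr 2 <;> field_simp <;> ring

end Field

end Matrix

theorem stmt_17_general (n : ℕ) (α β : ℝ)
    (hα : α = 0) (hβ : β ∈ Set.Ioc (-π) π) (hβ0 : β ≠ 0)
    (M : Matrix (Fin n) (Fin n) ℂ)
    (hM : M.IsHermitian) (hMu : M ∈ Matrix.unitaryGroup (Fin n) ℂ)
    (r t : ℝ) (ht0 : 0 < t)
    (hr : ∀ j, ‖M j j‖ = r)
    (ht : ∀ j l, j ≠ l → ‖M j l‖ = t)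
    (d : ℝ) (hd : d = r / t)
    (U : Matrix (Fin n) (Fin n) ℂ)
    (hU : U = Complex.exp (Complex.I * ((α + β) / 2)) •
        ((Real.cos ((α - β) / 2) : ℂ) • (1 : Matrix (Fin n) (Fin n) ℂ) +
          (Complex.I * (Real.sin ((α - β) / 2) : ℂ)) • M)) :
    ∀ k : ℝ, 0 < k → ∀ j l : Fin n, j ≠ l →
      ‖(((((k : ℂ) - 1) • U + ((k : ℂ) + 1) • (1 : Matrix (Fin n) (Fin n) ℂ))⁻¹ *
            (((k : ℂ) + 1) • U + ((k : ℂ) - 1) • (1 : Matrix (Fin n) (Fin n) ℂ))) j j)‖ ^ 2 /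
          ‖(((((k : ℂ) - 1) • U + ((k : ℂ) + 1) • (1 : Matrix (Fin n) (Fin n) ℂ))⁻¹ *
            (((k : ℂ) + 1) • U + ((k : ℂ) - 1) • (1 : Matrix (Fin n) (Fin n) ℂ))) j l)‖ ^ 2 =
        d ^ 2 + (d ^ 2 + n - 1) * Real.cot (β / 2) ^ 2 * k ^ 2 := by
  subst hα hd
  intro k hk j l hjl
  set w := Complex.exp (Complex.I * β)
  have hUw : U = ((1 + w) / 2) • 1 + ((1 - w) / 2) • M := by
    rw [hU, exp_smul_cos_smul_one_add_I_mul_sin_smul, Complex.ofReal_zero, mul_zero,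
      Complex.exp_zero]
  have hD := Complex.add_one_add_sub_one_mul_ne_zero hk (w := w) (by simp [w, Complex.norm_exp])
  have hw : 1 - w ≠ 0 := sub_ne_zero.mpr (Complex.exp_I_mul_ne_one hβ hβ0).symm
  have hS := scatteringMatrix_eq_smul_one_add_smul (hM.mul_self_eq_one_of_mem_unitaryGroup hMu)
    (Complex.ofReal_ne_zero.mpr hk.ne') hD
  have hratio : (k * (1 + w) / ((k + 1) + (k - 1) * w)) / ((1 - w) / ((k + 1) + (k - 1) * w))
      = ((k * Real.cot (β / 2) : ℝ) : ℂ) * Complex.I := by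
    rw [div_div_div_cancel_right₀ hD, mul_div_assoc, Complex.one_add_exp_div_one_sub_exp]
    push_cast
    ring
  change ‖scatteringMatrix U k j j‖ ^ 2 / ‖scatteringMatrix U k j l‖ ^ 2 = _
  rw [hUw, sq_norm_div_sq_norm_of_eq_smul_one_add_smul hS (div_ne_zero hw hD) hjl, hratio,
    add_comm, Complex.sq_norm_add_ofReal_mul_I (Complex.conj_eq_iff_im.mp (hM.apply j j)), hr,
    ht j l hjl]
  have hrow := sq_add_card_sub_one_mul_sq_of_mem_unitaryGroup hMu hr ht j
  rw [Fintype.card_fin] at hrow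
  have hdt : (r / t) ^ 2 + n - 1 = 1 / t ^ 2 := by
    field_simp
    linear_combination hrow
  rw [hdt]
  ring

theorem stmt_17 (n : ℕ) (α β : ℝ)
    (hα : α = 0) (hβ : β ∈ Set.Ioc (-π) π) (hβ0 : β ≠ 0) (hβπ : β ≠ π)
    (M : Matrix (Fin n) (Fin n) ℂ)
    (hM : M.IsHermitian) (hMu : M ∈ Matrix.unitaryGroup (Fin n) ℂ)
    (hnd : ¬ M.IsDiag)
    (r t : ℝ) (ht0 : 0 < t)
    (hr : ∀ j, ‖M j j‖ = r)
    (ht : ∀ j l, j ≠ l → ‖M j l‖ = t)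
    (d : ℝ) (hd : d = r / t)
    (U : Matrix (Fin n) (Fin n) ℂ)
    (hU : U = Complex.exp (Complex.I * ((α + β) / 2)) •
        ((Real.cos ((α - β) / 2) : ℂ) • (1 : Matrix (Fin n) (Fin n) ℂ) +
          (Complex.I * (Real.sin ((α - β) / 2) : ℂ)) • M)) :
    ∀ k : ℝ, 0 < k → ∀ j l : Fin n, j ≠ l →
      ‖(((((k : ℂ) - 1) • U + ((k : ℂ) + 1) • (1 : Matrix (Fin n) (Fin n) ℂ))⁻¹ *
            (((k : ℂ) + 1) • U + ((k : ℂ) - 1) • (1 : Matrix (Fin n) (Fin n) ℂ))) j j)‖ ^ 2 /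
          ‖(((((k : ℂ) - 1) • U + ((k : ℂ) + 1) • (1 : Matrix (Fin n) (Fin n) ℂ))⁻¹ *
            (((k : ℂ) + 1) • U + ((k : ℂ) - 1) • (1 : Matrix (Fin n) (Fin n) ℂ))) j l)‖ ^ 2 =
        d ^ 2 + (d ^ 2 + n - 1) * Real.cot (β / 2) ^ 2 * k ^ 2 :=
  stmt_17_general n α β hα hβ hβ0 M hM hMu r t ht0 hr ht d hd U hU
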